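/- Let F = {{1,2,3},{1,4,5},{1,6,7},{2,4,7},{2,5,6},{3,4,6},{3,5,7}} and for each triple {i,j,k} ∈ F let S_{ijk} be the set of vectors in ℚ^7 whose coordinates at positions i, j, k are each ±2 and are 0 elsewhere; let S be the union of the seven sets S_{ijk}, and let H be the simple graph on S in which two distinct vectors are adjacent if and only if their squared Euclidean distance equals 16. Then H has exactly 56 vertices and its independence number equals 4. -/

import Mathlib

/-- The graph on a set `P` of points of `ℚⁿ` where two distinct points are
adjacent iff their squared Euclidean distance equals `s`. -/
def distSqGraph {n : ℕ} (P : Set (Fin n → ℚ)) (s : ℚ) : SimpleGraph P where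
  Adj x y := x ≠ y ∧ ∑ i, (x.1 i - y.1 i) ^ 2 = s
  symm := by
    constructor
    rintro x y ⟨hne, h⟩
    refine ⟨hne.symm, ?_⟩
    rw [← h]
    exact Finset.sum_congr rfl fun i _ => by ring
  loopless := by constructor; rintro x ⟨h, -⟩; exact h rfl

/-- The family `F = {{1,2,3},{1,4,5},{1,6,7},{2,4,7},{2,5,6},{3,4,6},{3,5,7}}`
of triples from `{1,…,7}`, written with `0`-based indices. -/
def fano : Finset (Finset (Fin 7)) :=
  {{0, 1, 2}, {0, 3, 4}, {0, 5, 6}, {1, 3, 6}, {1, 4, 5}, {2, 3, 5}, {2, 4, 6}}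

/-- `S`: vectors of `ℚ⁷` that are `±2` on some triple of `F` and `0` elsewhere. -/
def Sset : Set (Fin 7 → ℚ) :=
  {x | ∃ A ∈ fano, (∀ i ∈ A, x i = 2 ∨ x i = -2) ∧ ∀ i ∉ A, x i = 0}

/-- `T`: vectors of `ℚ⁷` that are `0` on some triple of `F` and `±1` elsewhere. -/
def Tset : Set (Fin 7 → ℚ) :=
  {x | ∃ A ∈ fano, (∀ i ∈ A, x i = 0) ∧ ∀ i ∉ A, x i = 1 ∨ x i = -1}

/-! Every point of `S` has squared norm `12`, and since any two Fano lines meet in an odd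
number of points, the inner product of two points of `S` is `4` modulo `8`. Two distinct points
are adjacent exactly when their inner product is `4`, and it is always below `12`, so in an
independent set all pairwise inner products are at most `-4`. For `m` such vectors,
`0 ≤ ‖∑ v‖² ≤ 12 m - 4 m (m - 1)` forces `m ≤ 4`; the four sign vectors on one line with an
even number of minus signs attain the bound. -/

open Finset

section SignVectors

variable {ι : Type*} [Fintype ι] [DecidableEq ι]

def signVectors (A : Finset ι) : Finset (ι → ℚ) :=
  Fintype.piFinset fun i => if i ∈ A then {2, -2} else {0}

theorem mem_signVectors {A : Finset ι} {x : ι → ℚ} :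
    x ∈ signVectors A ↔ (∀ i ∈ A, x i = 2 ∨ x i = -2) ∧ ∀ i ∉ A, x i = 0 := by
  simp only [signVectors, Fintype.mem_piFinset]
  constructor
  · intro h
    exact ⟨fun i hi => by simpa [hi] using h i, fun i hi => by simpa [hi] using h i⟩
  · rintro ⟨hA, hAc⟩ i
    by_cases hi : i ∈ A <;> simp [hi, hA, hAc]

theorem card_signVectors (A : Finset ι) : #(signVectors A) = 2 ^ #A := by
  simp [signVectors, apply_ite card, prod_ite_mem, card_pair (by norm_num : (2 : ℚ) ≠ -2)]

theorem eq_of_mem_signVectors {A B : Finset ι} {x : ι → ℚ} (hA : x ∈ signVectors A)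
    (hB : x ∈ signVectors B) : A = B := by
  have support_eq : ∀ {C : Finset ι}, x ∈ signVectors C → ∀ i, i ∈ C ↔ x i ≠ 0 := by
    intro C hC i
    obtain ⟨hpm, hzero⟩ := mem_signVectors.1 hC
    refine ⟨fun hi => ?_, fun hi => by_contra fun hni => hi (hzero i hni)⟩
    rcases hpm i hi with h | h <;> norm_num [h]
  ext i
  rw [support_eq hA, support_eq hB]

theorem dotProduct_eq_sum_inter {A B : Finset ι} {x y : ι → ℚ} (hx : x ∈ signVectors A)
    (hy : y ∈ signVectors B) : x ⬝ᵥ y = ∑ i ∈ A ∩ B, x i * y i := by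
  refine (sum_subset (subset_univ _) fun i _ hi => ?_).symm
  rcases not_and_or.1 (mem_inter.not.1 hi) with hiA | hiB
  · simp [(mem_signVectors.1 hx).2 i hiA]
  · simp [(mem_signVectors.1 hy).2 i hiB]

theorem dotProduct_self_of_mem_signVectors {A : Finset ι} {x : ι → ℚ}
    (hx : x ∈ signVectors A) : x ⬝ᵥ x = 4 * #A := by
  rw [dotProduct_eq_sum_inter hx hx, inter_self, ← nsmul_eq_mul', ← sum_const]
  refine sum_congr rfl fun i hi => ?_
  rcases (mem_signVectors.1 hx).1 i hi with h | h <;> norm_num [h]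

end SignVectors

theorem exists_sum_eq_mul_card_sub {ι R : Type*} [CommRing R] (t : Finset ι) (f : ι → R)
    (c : R) (h : ∀ i ∈ t, f i = c ∨ f i = -c) : ∃ j : ℤ, ∑ i ∈ t, f i = c * (#t - 2 * j) := by
  induction t using Finset.cons_induction with
  | empty => exact ⟨0, by simp⟩
  | cons a t ha ih =>
    obtain ⟨j, hj⟩ := ih fun i hi => h i (mem_cons_of_mem hi)
    rw [sum_cons, card_cons, hj]
    rcases h a (mem_cons_self a t) with hfa | hfa
    · exact ⟨j, by rw [hfa]; push_cast; ring⟩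
    · exact ⟨j + 1, by rw [hfa]; push_cast; ring⟩

theorem mul_card_sub_one_le_of_dotProduct_le {ι m R : Type*} [Fintype m] [CommRing R]
    [LinearOrder R] [IsStrictOrderedRing R] (s : Finset ι) (v : ι → m → R) (r c : R)
    (hs : s.Nonempty) (hnorm : ∀ i ∈ s, v i ⬝ᵥ v i = r)
    (hinner : ∀ i ∈ s, ∀ j ∈ s, i ≠ j → v i ⬝ᵥ v j ≤ -c) : c * (#s - 1) ≤ r := by
  classical
  have row_le : ∀ i ∈ s, ∑ j ∈ s, v i ⬝ᵥ v j ≤ r - c * (#s - 1) := by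
    intro i hi
    calc ∑ j ∈ s, v i ⬝ᵥ v j = v i ⬝ᵥ v i + ∑ j ∈ s.erase i, v i ⬝ᵥ v j :=
          (add_sum_erase s _ hi).symm
      _ ≤ r + ∑ j ∈ s.erase i, -c :=
          add_le_add (hnorm i hi).le <| sum_le_sum fun j hj =>
            hinner i hi j (mem_of_mem_erase hj) (ne_of_mem_erase hj).symm
      _ = r - c * (#s - 1) := by
          rw [sum_const, card_erase_of_mem hi, nsmul_eq_mul, Nat.cast_pred (card_pos.2 hs)]
          ring
  have gram_nonneg : 0 ≤ (∑ i ∈ s, v i) ⬝ᵥ (∑ i ∈ s, v i) :=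
    Fintype.sum_nonneg fun _ => mul_self_nonneg _
  have gram_le : (∑ i ∈ s, v i) ⬝ᵥ (∑ i ∈ s, v i) ≤ #s * (r - c * (#s - 1)) := by
    rw [sum_dotProduct]
    simp_rw [dotProduct_sum]
    exact (sum_le_sum row_le).trans_eq (by rw [sum_const, nsmul_eq_mul])
  have hcard : (0 : R) < #s := by exact_mod_cast card_pos.2 hs
  nlinarith

theorem card_of_mem_fano : ∀ A ∈ fano, #A = 3 := by simp [fano]

theorem card_inter_of_mem_fano : ∀ A ∈ fano, ∀ B ∈ fano, #(A ∩ B) = 1 ∨ #(A ∩ B) = 3 := by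
  simp [fano]

theorem Sset_eq_biUnion : Sset = ↑(fano.biUnion signVectors) := by
  ext x
  simp only [Sset, coe_biUnion, Set.mem_iUnion, mem_coe, mem_signVectors, Set.mem_ofPred_eq,
    exists_prop]

theorem Sset_ncard : Sset.ncard = 56 := by
  rw [Sset_eq_biUnion, Set.ncard_coe_finset,
    card_biUnion fun A _ B _ hAB =>
      disjoint_left.2 fun _ hA hB => hAB (eq_of_mem_signVectors hA hB),
    sum_congr rfl fun A hA => by rw [card_signVectors, card_of_mem_fano A hA]]
  rfl

instance : Finite Sset := by
  rw [Sset_eq_biUnion]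
  exact Finset.finite_toSet _

theorem exists_signVectors_of_mem_Sset {x : Fin 7 → ℚ} (hx : x ∈ Sset) :
    ∃ A ∈ fano, x ∈ signVectors A := by
  simpa [Sset_eq_biUnion] using hx

theorem dotProduct_self_of_mem_Sset {x : Fin 7 → ℚ} (hx : x ∈ Sset) : x ⬝ᵥ x = 12 := by
  obtain ⟨A, hA, hxA⟩ := exists_signVectors_of_mem_Sset hx
  rw [dotProduct_self_of_mem_signVectors hxA, card_of_mem_fano A hA]
  norm_num

theorem exists_dotProduct_eq_of_mem_Sset {x y : Fin 7 → ℚ} (hx : x ∈ Sset) (hy : y ∈ Sset) :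
    ∃ j : ℤ, x ⬝ᵥ y = 4 - 8 * j := by
  obtain ⟨A, hA, hxA⟩ := exists_signVectors_of_mem_Sset hx
  obtain ⟨B, hB, hyB⟩ := exists_signVectors_of_mem_Sset hy
  have term : ∀ i ∈ A ∩ B, x i * y i = 4 ∨ x i * y i = -4 := by
    intro i hi
    rcases (mem_signVectors.1 hxA).1 i (mem_inter.1 hi).1 with h | h <;>
      rcases (mem_signVectors.1 hyB).1 i (mem_inter.1 hi).2 with h' | h' <;> norm_num [h, h']
  obtain ⟨j, hj⟩ := exists_sum_eq_mul_card_sub _ _ _ term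
  rw [dotProduct_eq_sum_inter hxA hyB, hj]
  rcases card_inter_of_mem_fano A hA B hB with h | h <;> rw [h]
  · exact ⟨j, by push_cast; ring⟩
  · exact ⟨j - 1, by push_cast; ring⟩

theorem sum_sq_sub_eq_dotProduct {m R : Type*} [Fintype m] [CommRing R] (x y : m → R) :
    ∑ i, (x i - y i) ^ 2 = x ⬝ᵥ x - 2 * x ⬝ᵥ y + y ⬝ᵥ y := by
  simp only [dotProduct, mul_sum, ← sum_sub_distrib, ← sum_add_distrib]
  exact sum_congr rfl fun i _ => by ring

theorem dotProduct_le_of_not_adj {x y : Sset} (hxy : x ≠ y)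
    (h : ¬ (distSqGraph Sset 16).Adj x y) : x.1 ⬝ᵥ y.1 ≤ -4 := by
  obtain ⟨j, hj⟩ := exists_dotProduct_eq_of_mem_Sset x.2 y.2
  have hdist := sum_sq_sub_eq_dotProduct x.1 y.1
  rw [dotProduct_self_of_mem_Sset x.2, dotProduct_self_of_mem_Sset y.2, hj] at hdist
  have hpos : 0 < ∑ i, (x.1 i - y.1 i) ^ 2 := by
    obtain ⟨i, hi⟩ := Function.ne_iff.1 (Subtype.coe_ne_coe.2 hxy)
    exact sum_pos' (fun i _ => sq_nonneg _) ⟨i, mem_univ i, sq_pos_iff.2 (sub_ne_zero.2 hi)⟩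
  have hne : ∑ i, (x.1 i - y.1 i) ^ 2 ≠ 16 := fun h16 => h ⟨hxy, h16⟩
  have hj_gt : -1 < j := by exact_mod_cast (by linarith : (-1 : ℚ) < j)
  have hj_ne : j ≠ 0 := by
    rintro rfl
    exact hne (by rw [hdist]; norm_num)
  have : (1 : ℚ) ≤ j := by exact_mod_cast (by omega : 1 ≤ j)
  linarith

def tetrahedron : Fin 4 → Fin 7 → ℚ :=
  ![![2, 2, 2, 0, 0, 0, 0], ![2, -2, -2, 0, 0, 0, 0], ![-2, 2, -2, 0, 0, 0, 0],
    ![-2, -2, 2, 0, 0, 0, 0]]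

theorem tetrahedron_mem_Sset (k : Fin 4) : tetrahedron k ∈ Sset := by
  rw [Sset_eq_biUnion, coe_biUnion]
  exact Set.mem_biUnion (x := {0, 1, 2}) (by decide) (by fin_cases k <;> decide)

theorem sum_sq_sub_tetrahedron {k l : Fin 4} (hkl : k ≠ l) :
    ∑ i, (tetrahedron k i - tetrahedron l i) ^ 2 = 32 := by
  fin_cases k <;> fin_cases l <;> simp_all [tetrahedron, Fin.sum_univ_seven] <;> norm_num

theorem exists_indep_four : ∃ M : Set ↥Sset,
    M.Pairwise (fun a b => ¬ (distSqGraph Sset 16).Adj a b) ∧ M.ncard = 4 := by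
  set v : Fin 4 → Sset := fun k => ⟨tetrahedron k, tetrahedron_mem_Sset k⟩
  have hv : Function.Injective v := fun k l hkl => by
    by_contra hne
    have h32 := sum_sq_sub_tetrahedron hne
    rw [show tetrahedron k = tetrahedron l from congrArg Subtype.val hkl] at h32
    simp at h32
  refine ⟨Set.range v, ?_, by rw [Set.ncard_range_of_injective hv, Nat.card_fin]⟩
  rintro _ ⟨k, rfl⟩ _ ⟨l, rfl⟩ hne ⟨-, h16⟩
  rw [sum_sq_sub_tetrahedron fun h => hne (congrArg v h)] at h16
  norm_num at h16

/-- The graph `H` on `S` (squared distance `16`) has `56` vertices and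
independence number `4`. -/
theorem card_and_indepNum_H :
    Sset.ncard = 56 ∧
    (∃ M : Set ↥Sset,
      M.Pairwise (fun a b => ¬ (distSqGraph Sset 16).Adj a b) ∧ M.ncard = 4) ∧
    ∀ M : Set ↥Sset,
      M.Pairwise (fun a b => ¬ (distSqGraph Sset 16).Adj a b) → M.ncard ≤ 4 := by
  refine ⟨Sset_ncard, exists_indep_four, fun M hM => ?_⟩
  rcases M.eq_empty_or_nonempty with rfl | hne
  · simp
  have hfin := M.toFinite
  have hbound := mul_card_sub_one_le_of_dotProduct_le hfin.toFinset Subtype.val 12 4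
    (by simpa using hne) (fun x _ => dotProduct_self_of_mem_Sset x.2)
    fun x hx y hy hxy => dotProduct_le_of_not_adj hxy <|
      hM (hfin.mem_toFinset.1 hx) (hfin.mem_toFinset.1 hy) hxy
  rw [Set.ncard_eq_toFinset_card M hfin]
  exact_mod_cast (by linarith : (#hfin.toFinset : ℚ) ≤ 4)
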